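/- Let 𝓛₀₁ be the set of all Borel probability measures on ℝ with mean 0 and variance 1, and let α∈(0,1). Then inf_{μ∈𝓛₀₁} ES_α(μ) = 0 and sup_{μ∈𝓛₀₁} ES_α(μ) = √((1-α)/α). -/

import Mathlib

open MeasureTheory Set

/-- The set of all Borel probability measures on ℝ with mean 0 and variance 1. -/
def stdMeasures : Set (Measure ℝ) :=
  {μ | IsProbabilityMeasure μ ∧ (∫ x, x ∂μ) = 0 ∧ (∫ x, x ^ 2 ∂μ) = 1}

/-- The distribution function of a measure: `F_μ(x) = μ((-∞, x])`. -/
noncomputable def distFun (μ : Measure ℝ) (x : ℝ) : ℝ := (μ (Iic x)).toReal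

/-- The lower quantile of order `α`: `q_α(μ) = inf {x : F_μ(x) ≥ α}`. -/
noncomputable def lowerQuantile (μ : Measure ℝ) (α : ℝ) : ℝ :=
  sInf {x : ℝ | α ≤ distFun μ x}

/-- The Value-at-Risk of order `α`: `VaR_α(μ) = -q_α(μ)`. -/
noncomputable def VaR (μ : Measure ℝ) (α : ℝ) : ℝ := - lowerQuantile μ α

/-- The Expected Shortfall of order `α`: `ES_α(μ) = (1/α) ∫₀^α VaR_u(μ) du`. -/
noncomputable def ES (μ : Measure ℝ) (α : ℝ) : ℝ :=
  (1 / α) * ∫ u in (0 : ℝ)..α, VaR μ u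

/-!
Under Lebesgue measure on `(0, 1)` the quantile function `Q` of `μ` has law `μ`, so
`∫₀¹ Q = 0`, `∫₀¹ Q² = 1` and `α · ES_α(μ) = -∫₀^α Q`. As `Q` is nondecreasing with mean zero,
`∫₀^α Q ≤ 0`, whence `ES_α ≥ 0`. The integrals of `Q` over `(0, α]` and `(α, 1)` are opposite,
so Cauchy–Schwarz on both pieces together with `∫₀¹ Q² = 1` gives `(∫₀^α Q)² ≤ α (1 - α)`, i.e.
`ES_α ≤ √((1 - α) / α)`. Conversely, the law with mass `1 / (1 + s²)` at `-s` and the rest at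
`1 / s` is standard, and for `0 < s ≤ √((1 - α) / α)` its quantiles below `α` all equal `-s`, so
its `ES_α` is `s`; these values fill `(0, √((1 - α) / α)]`.
-/

open Filter Topology ProbabilityTheory

section Quantile

variable {μ : Measure ℝ} [IsProbabilityMeasure μ]

lemma distFun_eq_cdf (x : ℝ) : distFun μ x = cdf μ x := (cdf_eq_real μ x).symm

lemma setOf_le_distFun_nonempty {u : ℝ} (hu : u < 1) : {x | u ≤ distFun μ x}.Nonempty := by
  obtain ⟨x, hx⟩ := ((tendsto_cdf_atTop μ).eventually (eventually_ge_nhds hu)).exists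
  exact ⟨x, by rwa [mem_ofPred_eq, distFun_eq_cdf]⟩

lemma bddBelow_setOf_le_distFun {u : ℝ} (hu : 0 < u) : BddBelow {x | u ≤ distFun μ x} := by
  obtain ⟨y, hy⟩ := ((tendsto_cdf_atBot μ).eventually (eventually_lt_nhds hu)).exists
  refine ⟨y, fun z hz => le_of_not_gt fun hzy => ?_⟩
  rw [mem_ofPred_eq, distFun_eq_cdf] at hz
  exact (hz.trans (monotone_cdf μ hzy.le)).not_gt hy

lemma lowerQuantile_le_iff {u x : ℝ} (hu : u ∈ Ioo (0 : ℝ) 1) :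
    lowerQuantile μ u ≤ x ↔ u ≤ distFun μ x := by
  refine ⟨fun h => ?_, fun h => csInf_le (bddBelow_setOf_le_distFun hu.1) h⟩
  have hright : ∀ z, x < z → u ≤ cdf μ z := fun z hz => by
    obtain ⟨w, hw, hwz⟩ := exists_lt_of_csInf_lt (setOf_le_distFun_nonempty hu.2) (h.trans_lt hz)
    rw [mem_ofPred_eq, distFun_eq_cdf] at hw
    exact hw.trans (monotone_cdf μ hwz.le)
  rw [distFun_eq_cdf]
  exact ge_of_tendsto (((cdf μ).right_continuous x).tendsto.mono_left
    (nhdsWithin_mono x Ioi_subset_Ici_self)) (eventually_nhdsWithin_of_forall hright)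

lemma lowerQuantile_eq_of_forall_lt {u a : ℝ} (hu : u ∈ Ioo (0 : ℝ) 1)
    (hlt : ∀ x < a, distFun μ x < u) (ha : u ≤ distFun μ a) : lowerQuantile μ u = a :=
  le_antisymm ((lowerQuantile_le_iff hu).2 ha) <| le_of_forall_lt fun x hx =>
    lt_of_not_ge fun hle => ((lowerQuantile_le_iff hu).1 hle).not_gt (hlt x hx)

lemma monotoneOn_lowerQuantile : MonotoneOn (lowerQuantile μ) (Ioo (0 : ℝ) 1) :=
  fun _ hu _ hv huv => csInf_le_csInf (bddBelow_setOf_le_distFun hu.1)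
    (setOf_le_distFun_nonempty hv.2) fun _ hz => huv.trans hz

lemma aemeasurable_lowerQuantile :
    AEMeasurable (lowerQuantile μ) (volume.restrict (Ioo (0 : ℝ) 1)) :=
  aemeasurable_restrict_of_monotoneOn measurableSet_Ioo monotoneOn_lowerQuantile

lemma map_lowerQuantile : (volume.restrict (Ioo (0 : ℝ) 1)).map (lowerQuantile μ) = μ := by
  refine Measure.ext_of_Iic _ μ fun x => ?_
  rw [Measure.map_apply_of_aemeasurable aemeasurable_lowerQuantile measurableSet_Iic,
    Measure.restrict_apply' measurableSet_Ioo]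
  set t := distFun μ x
  have ht1 : t ≤ 1 := ENNReal.toReal_le_of_le_ofReal zero_le_one (by simp [prob_le_one])
  have hpre : lowerQuantile μ ⁻¹' Iic x ∩ Ioo 0 1 = Iic t ∩ Ioo 0 1 := by
    ext u
    simp only [mem_inter_iff, mem_preimage, mem_Iic, and_congr_left_iff]
    exact fun hu => lowerQuantile_le_iff hu
  have hvol : volume (Iic t ∩ Ioo (0 : ℝ) 1) = ENNReal.ofReal t := by
    refine le_antisymm ?_ ?_
    · calc _ ≤ volume (Ioc 0 t) := measure_mono fun u hu => ⟨hu.2.1, hu.1⟩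
        _ = _ := by rw [Real.volume_Ioc, sub_zero]
    · calc ENNReal.ofReal t = volume (Ioo 0 t) := by rw [Real.volume_Ioo, sub_zero]
        _ ≤ volume (Iic t ∩ Ioo 0 1) :=
          measure_mono fun u hu => ⟨hu.2.le, hu.1, hu.2.trans_le ht1⟩
  rw [hpre, hvol]
  exact ENNReal.ofReal_toReal (measure_ne_top μ _)

lemma integrableOn_comp_lowerQuantile_iff {f : ℝ → ℝ} (hf : Measurable f) :
    IntegrableOn (fun u => f (lowerQuantile μ u)) (Ioo 0 1) ↔ Integrable f μ := by
  conv_rhs => rw [← map_lowerQuantile (μ := μ)]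
  exact (integrable_map_measure hf.aestronglyMeasurable aemeasurable_lowerQuantile).symm

lemma setIntegral_comp_lowerQuantile {f : ℝ → ℝ} (hf : Measurable f) :
    ∫ u in Ioo 0 1, f (lowerQuantile μ u) = ∫ x, f x ∂μ := by
  conv_rhs => rw [← map_lowerQuantile (μ := μ)]
  exact (integral_map aemeasurable_lowerQuantile hf.aestronglyMeasurable).symm

end Quantile

lemma sq_setIntegral_le {X : Type*} [MeasurableSpace X] {μ : Measure X} {s : Set X}
    {f : X → ℝ} (hs : μ s ≠ ⊤) (hf : IntegrableOn f s μ)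
    (hf2 : IntegrableOn (fun x => f x ^ 2) s μ) :
    (∫ x in s, f x ∂μ) ^ 2 ≤ μ.real s * ∫ x in s, f x ^ 2 ∂μ := by
  rcases eq_or_ne (μ s) 0 with h0 | h0
  · simp [setIntegral_measure_zero _ h0]
  have hpos : 0 < μ.real s := ENNReal.toReal_pos h0 hs
  have jensen := (even_two.convexOn_pow (𝕜 := ℝ)).map_set_average_le
    (continuous_pow 2).continuousOn isClosed_univ h0 hs (by simp) hf hf2
  simp only [setAverage_eq, smul_eq_mul] at jensen
  rw [mul_pow, inv_pow, ← div_eq_inv_mul, ← div_eq_inv_mul, div_le_div_iff₀ (by positivity) hpos]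
    at jensen
  nlinarith

section UnitInterval

variable {f : ℝ → ℝ} {α : ℝ}

lemma setIntegral_Ioo_eq_add (hα : α ∈ Ioo (0 : ℝ) 1) (hf : IntegrableOn f (Ioo 0 1)) :
    ∫ u in Ioo 0 1, f u = (∫ u in Ioc 0 α, f u) + ∫ u in Ioo α 1, f u := by
  rw [← Ioc_union_Ioo_eq_Ioo hα.1.le hα.2] at hf ⊢
  exact setIntegral_union (disjoint_left.2 fun _ h1 h2 => h2.1.not_ge h1.2) measurableSet_Ioo
    (hf.mono_set subset_union_left) (hf.mono_set subset_union_right)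

lemma setIntegral_Ioc_nonpos_of_monotoneOn (hα : α ∈ Ioo (0 : ℝ) 1)
    (hmono : MonotoneOn f (Ioo 0 1)) (hf : IntegrableOn f (Ioo 0 1))
    (hmean : ∫ u in Ioo 0 1, f u = 0) : ∫ u in Ioc 0 α, f u ≤ 0 := by
  have hIoc : Ioc 0 α ⊆ Ioo (0 : ℝ) 1 := fun u hu => ⟨hu.1, hu.2.trans_lt hα.2⟩
  have hIoo : Ioo α 1 ⊆ Ioo (0 : ℝ) 1 := fun u hu => ⟨hα.1.trans hu.1, hu.2⟩
  have hleft : ∫ u in Ioc 0 α, f u ≤ α * f α := by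
    have := setIntegral_mono_on (hf.mono_set hIoc) (integrableOn_const (by simp))
      measurableSet_Ioc fun u hu => hmono (hIoc hu) hα hu.2
    simpa [hα.1.le] using this
  have hright : (1 - α) * f α ≤ ∫ u in Ioo α 1, f u := by
    have := setIntegral_mono_on (integrableOn_const (by simp)) (hf.mono_set hIoo)
      measurableSet_Ioo fun u hu => hmono hα (hIoo hu) hu.1.le
    simpa [hα.2.le] using this
  rw [setIntegral_Ioo_eq_add hα hf] at hmean
  nlinarith [hα.1, hα.2]

lemma sq_setIntegral_Ioc_le (hα : α ∈ Ioo (0 : ℝ) 1) (hf : IntegrableOn f (Ioo 0 1))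
    (hf2 : IntegrableOn (fun u => f u ^ 2) (Ioo 0 1))
    (hmean : ∫ u in Ioo 0 1, f u = 0) (hsq : ∫ u in Ioo 0 1, f u ^ 2 = 1) :
    (∫ u in Ioc 0 α, f u) ^ 2 ≤ α * (1 - α) := by
  have hIoc : Ioc 0 α ⊆ Ioo (0 : ℝ) 1 := fun u hu => ⟨hu.1, hu.2.trans_lt hα.2⟩
  have hIoo : Ioo α 1 ⊆ Ioo (0 : ℝ) 1 := fun u hu => ⟨hα.1.trans hu.1, hu.2⟩
  have hleft := sq_setIntegral_le (by simp) (hf.mono_set hIoc) (hf2.mono_set hIoc)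
  have hright := sq_setIntegral_le (by simp) (hf.mono_set hIoo) (hf2.mono_set hIoo)
  rw [setIntegral_Ioo_eq_add hα hf] at hmean
  rw [setIntegral_Ioo_eq_add hα hf2] at hsq
  simp only [Real.volume_real_Ioc, Real.volume_real_Ioo, sub_zero, max_eq_left hα.1.le,
    max_eq_left (sub_nonneg.2 hα.2.le)] at hleft hright
  have hJ : ∫ u in Ioo α 1, f u = -∫ u in Ioc 0 α, f u := by linarith
  rw [hJ, neg_sq] at hright
  nlinarith [mul_le_mul_of_nonneg_left hleft (sub_nonneg.2 hα.2.le),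
    mul_le_mul_of_nonneg_left hright hα.1.le]

end UnitInterval

lemma ES_eq_neg_setIntegral_div (μ : Measure ℝ) {α : ℝ} (hα : 0 ≤ α) :
    ES μ α = -(∫ u in Ioc 0 α, lowerQuantile μ u) / α := by
  simp only [ES, VaR, intervalIntegral.integral_of_le hα, integral_neg]
  ring

lemma ES_mem_Icc_of_mem_stdMeasures {μ : Measure ℝ} (hμ : μ ∈ stdMeasures) {α : ℝ}
    (hα : α ∈ Ioo (0 : ℝ) 1) : ES μ α ∈ Icc 0 √((1 - α) / α) := by
  obtain ⟨_, hmean, hvar⟩ := hμ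
  have hint2 : Integrable (fun x : ℝ => x ^ 2) μ := .of_integral_ne_zero (by simp [hvar])
  have hint : Integrable (fun x : ℝ => x) μ :=
    ((memLp_two_iff_integrable_sq aestronglyMeasurable_id).2 hint2).integrable one_le_two
  have hQ := (integrableOn_comp_lowerQuantile_iff measurable_id').2 hint
  have hQ2 := (integrableOn_comp_lowerQuantile_iff (measurable_id'.pow_const 2)).2 hint2
  have hQmean := (setIntegral_comp_lowerQuantile measurable_id').trans hmean
  have hQvar := (setIntegral_comp_lowerQuantile (measurable_id'.pow_const 2)).trans hvar
  have hnonpos := setIntegral_Ioc_nonpos_of_monotoneOn hα monotoneOn_lowerQuantile hQ hQmean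
  have hsq := sq_setIntegral_Ioc_le hα hQ hQ2 hQmean hQvar
  rw [ES_eq_neg_setIntegral_div μ hα.1.le]
  refine ⟨div_nonneg (neg_nonneg.2 hnonpos) hα.1.le, (le_abs_self _).trans (Real.abs_le_sqrt ?_)⟩
  rw [div_pow, neg_sq, div_le_div_iff₀ (pow_pos hα.1 2) hα.1]
  nlinarith [hα.1]

noncomputable def twoPoint (s : ℝ) : Measure ℝ :=
  ENNReal.ofReal (1 / (1 + s ^ 2)) • Measure.dirac (-s)
    + ENNReal.ofReal (s ^ 2 / (1 + s ^ 2)) • Measure.dirac (1 / s)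

section TwoPoint

variable {s : ℝ}

lemma integral_twoPoint {f : ℝ → ℝ} (hf : Measurable f) :
    ∫ x, f x ∂twoPoint s = 1 / (1 + s ^ 2) * f (-s) + s ^ 2 / (1 + s ^ 2) * f (1 / s) := by
  rw [twoPoint, integral_add_measure, integral_smul_measure, integral_smul_measure,
    integral_dirac, integral_dirac, ENNReal.toReal_ofReal (by positivity),
    ENNReal.toReal_ofReal (by positivity), smul_eq_mul, smul_eq_mul]
  all_goals
    exact (integrable_dirac' hf.stronglyMeasurable (by simp)).smul_measure ENNReal.ofReal_ne_top

lemma twoPoint_mem_stdMeasures (hs : s ≠ 0) : twoPoint s ∈ stdMeasures := by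
  refine ⟨⟨?_⟩, ?_, ?_⟩
  · simp only [twoPoint, Measure.coe_add, Measure.coe_smul, Pi.add_apply, Pi.smul_apply,
      measure_univ, smul_eq_mul, mul_one]
    rw [← ENNReal.ofReal_add (by positivity) (by positivity), ← add_div, add_comm,
      div_self (by positivity), ENNReal.ofReal_one]
  · rw [integral_twoPoint measurable_id']
    field_simp
    ring
  · rw [integral_twoPoint (measurable_id'.pow_const 2)]
    field_simp
    ring

lemma twoPoint_Iic_of_lt (hs : 0 < s) {x : ℝ} (hx : x < -s) : twoPoint s (Iic x) = 0 := by
  have h1s : x < s⁻¹ := hx.trans ((neg_neg_of_pos hs).trans (by positivity))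
  simp [twoPoint, hx.not_ge, h1s]

lemma ofReal_le_twoPoint_Iic : ENNReal.ofReal (1 / (1 + s ^ 2)) ≤ twoPoint s (Iic (-s)) := by
  simp [twoPoint]

lemma ES_twoPoint (hs : 0 < s) {α : ℝ} (hα0 : 0 < α) (hα : α ≤ 1 / (1 + s ^ 2)) :
    ES (twoPoint s) α = s := by
  have : IsProbabilityMeasure (twoPoint s) := (twoPoint_mem_stdMeasures hs.ne').1
  have hq : ∀ u ∈ Ioc 0 α, lowerQuantile (twoPoint s) u = -s := fun u hu => by
    have hu1 : u ≤ 1 / (1 + s ^ 2) := hu.2.trans hα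
    refine lowerQuantile_eq_of_forall_lt ⟨hu.1, hu1.trans_lt ?_⟩ (fun x hx => ?_) ?_
    · rw [div_lt_one (by positivity)]
      nlinarith
    · simp [distFun, twoPoint_Iic_of_lt hs hx, hu.1]
    · exact hu1.trans
        ((ENNReal.ofReal_le_iff_le_toReal (measure_ne_top _ _)).1 ofReal_le_twoPoint_Iic)
  rw [ES_eq_neg_setIntegral_div _ hα0.le, setIntegral_congr_fun measurableSet_Ioc hq]
  simp [hα0.le]
  field_simp

end TwoPoint

lemma Ioc_subset_image_ES {α : ℝ} (hα : α ∈ Ioo (0 : ℝ) 1) :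
    Ioc 0 √((1 - α) / α) ⊆ (fun μ : Measure ℝ => ES μ α) '' stdMeasures := by
  rintro t ⟨ht0, ht⟩
  refine ⟨twoPoint t, twoPoint_mem_stdMeasures ht0.ne', ES_twoPoint ht0 hα.1 ?_⟩
  have hsq : t ^ 2 ≤ (1 - α) / α := (Real.le_sqrt' ht0).1 ht
  rw [le_div_iff₀ (by positivity)]
  rw [le_div_iff₀ hα.1] at hsq
  nlinarith

/-- The extremal Expected Shortfalls over the class of standard probability
measures: `inf_μ ES_α(μ) = 0` and `sup_μ ES_α(μ) = √((1-α)/α)`. -/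
theorem extremal_expected_shortfall_std (α : ℝ) (hα : α ∈ Ioo (0 : ℝ) 1) :
    sInf ((fun μ : Measure ℝ => ES μ α) '' stdMeasures) = 0 ∧
    sSup ((fun μ : Measure ℝ => ES μ α) '' stdMeasures) =
      Real.sqrt ((1 - α) / α) := by
  have hpos : 0 < √((1 - α) / α) := Real.sqrt_pos.2 (div_pos (sub_pos.2 hα.2) hα.1)
  have hlower := Ioc_subset_image_ES hα
  have hupper : (fun μ : Measure ℝ => ES μ α) '' stdMeasures ⊆ Icc 0 √((1 - α) / α) := by
    rintro _ ⟨μ, hμ, rfl⟩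
    exact ES_mem_Icc_of_mem_stdMeasures hμ hα
  have hne := (nonempty_Ioc.2 hpos).mono hlower
  exact ⟨((isGLB_Ioc hpos).of_subset_of_superset (isGLB_Icc hpos.le) hlower hupper).csInf_eq hne,
    ((isLUB_Ioc hpos).of_subset_of_superset (isLUB_Icc hpos.le) hlower hupper).csSup_eq hne⟩
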